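/- arXiv:1811.02096 — 4 statements merged into one kernel-verified Lean document; each statement's English description precedes it below -/
import Mathlib

section
/- Let Γ = XᵀX/n − Σ_x, where the rows x_iᵀ of X are i.i.d. zero-mean random vectors with covariance Σ_x satisfying assumptions (A1)–(A3). Fix δ > 0 and suppose the sample size satisfies (2k log p)⁷/n ≤ C₂ n^{−c₂}. Then with probability at least 1 − C n^{−c} − exp(−c' log p), |vᵀ Γ v| ≤ δ simultaneously for all v ∈ ℝ^p with at most 2k nonzero coordinates and ‖v‖₂ ≤ 1. -/
open MeasureTheory ProbabilityTheory Real Finset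
open scoped ENNReal

/-!
Each entry of `Γ` is a centred average of i.i.d. sub-exponential variables, so Bernstein's
inequality (Chernoff with `E exp(tZ) ≤ exp(32 C₁² t²)` for `|t| ≤ 1/(2C₁)`) gives
`|Γ_jk| > δ/(2k)` with probability at most `2 exp(-α n/(2k)²)`, and a union bound covers all
`p²` entries. Off that event, a `2k`-sparse `v` with `‖v‖₂ ≤ 1` has
`|vᵀΓv| ≤ max |Γ_jk| ‖v‖₁² ≤ max |Γ_jk| · 2k ≤ δ`. Once `n` exceeds a threshold `N₀(α, C₂)`, the
sample-size condition forces `α n/(2k)² ≥ 4 log p`, so the failure probability is at most `1/p`;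
below `N₀` the claimed bound, with `C = N₀` and `c = c' = 1`, is vacuous.
-/

lemma Real.exp_le_one_add_add_sq_mul_exp_abs (u : ℝ) : exp u ≤ 1 + u + u ^ 2 * exp |u| := by
  have hinv : exp u * exp (-u) = 1 := by rw [← exp_add, add_neg_cancel, exp_zero]
  -- `1 - u ≤ e⁻ᵘ`, i.e. `(1 - u) eᵘ ≤ 1`
  have hfirst : exp u ≤ 1 + u + u * (exp u - 1) := by nlinarith [exp_pos u, add_one_le_exp (-u)]
  have hsecond : u * (exp u - 1) ≤ u ^ 2 * exp |u| := by
    rcases le_total 0 u with hu | hu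
    · rw [abs_of_nonneg hu]
      nlinarith [exp_pos u, mul_nonneg hu hu, add_one_le_exp (-u)]
    · nlinarith [sq_nonneg u, one_le_exp (abs_nonneg u), add_one_le_exp u]
  linarith

lemma Real.sq_le_four_mul_exp {s : ℝ} (hs : 0 ≤ s) : s ^ 2 ≤ 4 * exp s := by
  have h := add_one_le_exp (s / 2)
  have h2 : exp s = exp (s / 2) * exp (s / 2) := by rw [← exp_add, add_halves]
  nlinarith [exp_pos (s / 2)]

-- The entries of `Γ = XᵀX/n − S`; the paper's `Γ` is the case `S = Σ_x`.
noncomputable def gramDeviation {n p : ℕ} (X : Fin n → Fin p → ℝ) (S : Fin p → Fin p → ℝ)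
    (j k : Fin p) : ℝ :=
  (n : ℝ)⁻¹ * ∑ i, X i j * X i k - S j k

lemma quadForm_gramDeviation {n p : ℕ} (X : Fin n → Fin p → ℝ) (S : Fin p → Fin p → ℝ)
    (v : Fin p → ℝ) :
    (n : ℝ)⁻¹ * ∑ i, (∑ j, X i j * v j) ^ 2 - ∑ j, ∑ k, v j * S j k * v k =
      ∑ j, ∑ k, v j * gramDeviation X S j k * v k := by
  simp only [gramDeviation, sq, mul_sub, sub_mul, sum_sub_distrib, mul_sum, sum_mul]
  rw [sum_comm]
  refine congrArg₂ _ (sum_congr rfl fun j _ => ?_) rfl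
  rw [sum_comm]
  exact sum_congr rfl fun k _ => sum_congr rfl fun i _ => by ring

lemma sq_sum_abs_le_card_mul_sum_sq {ι : Type*} [Fintype ι] (v : ι → ℝ) :
    (∑ j, |v j|) ^ 2 ≤ #{j | v j ≠ 0} * ∑ j, v j ^ 2 := by
  rw [← sum_filter_ne_zero, ← sum_filter_ne_zero (f := fun j => v j ^ 2)]
  simp only [ne_eq, abs_eq_zero, pow_eq_zero_iff two_ne_zero]
  simpa only [sq_abs] using sq_sum_le_card_mul_sum_sq (s := {j | v j ≠ 0}) (f := fun j => |v j|)

lemma abs_quadForm_le_of_sparse {ι : Type*} [Fintype ι] {A : ι → ι → ℝ} {ε : ℝ} (hε : 0 ≤ ε)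
    (hA : ∀ j k, |A j k| ≤ ε) {v : ι → ℝ} {s : ℕ} (hs : #{j | v j ≠ 0} ≤ s)
    (hv : ∑ j, v j ^ 2 ≤ 1) :
    |∑ j, ∑ k, v j * A j k * v k| ≤ ε * s := by
  calc |∑ j, ∑ k, v j * A j k * v k| ≤ ∑ j, ∑ k, |v j| * ε * |v k| := by
        refine (abs_sum_le_sum_abs _ _).trans (sum_le_sum fun j _ => ?_)
        refine (abs_sum_le_sum_abs _ _).trans (sum_le_sum fun k _ => ?_)
        rw [abs_mul, abs_mul]
        gcongr
        exact hA j k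
    _ = ε * (∑ j, |v j|) ^ 2 := by
        rw [sq, sum_mul_sum, mul_sum]
        exact sum_congr rfl fun j _ => by rw [mul_sum]; exact sum_congr rfl fun k _ => by ring
    _ ≤ ε * (#{j | v j ≠ 0} * 1) := by
        gcongr
        exact (sq_sum_abs_le_card_mul_sum_sq v).trans (by gcongr)
    _ ≤ ε * s := by rw [mul_one]; gcongr

-- A lower bound for the Chernoff exponent `t δ - 32 C² t²` at `t = min (δ/(64 C²)) (1/(2C))`.
noncomputable def bernsteinRate (C δ : ℝ) : ℝ := min (δ / (64 * C ^ 2)) (1 / (2 * C)) * δ / 2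

lemma bernsteinRate_pos {C δ : ℝ} (hC : 0 < C) (hδ : 0 < δ) : 0 < bernsteinRate C δ := by
  have : 0 < min (δ / (64 * C ^ 2)) (1 / (2 * C)) := by positivity
  unfold bernsteinRate; positivity

section Probability

variable {Ω : Type*} [MeasurableSpace Ω] {μ : Measure Ω} {C : ℝ}

section SubExponential

variable {Z : Ω → ℝ}

lemma integrable_exp_abs_div_of_lintegral_le (hZ : AEMeasurable Z μ)
    (hψ : ∫⁻ ω, ENNReal.ofReal (exp (|Z ω| / C)) ∂μ ≤ 2) :
    Integrable (fun ω => exp (|Z ω| / C)) μ := by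
  refine ⟨(hZ.abs.div_const C).exp.aestronglyMeasurable, ?_⟩
  simp only [hasFiniteIntegral_iff_ofReal (Filter.Eventually.of_forall fun ω => (exp_pos _).le)]
  exact hψ.trans_lt ENNReal.ofNat_lt_top

lemma integral_exp_abs_div_le (hZ : AEMeasurable Z μ)
    (hψ : ∫⁻ ω, ENNReal.ofReal (exp (|Z ω| / C)) ∂μ ≤ 2) :
    ∫ ω, exp (|Z ω| / C) ∂μ ≤ 2 := by
  rw [integral_eq_lintegral_of_nonneg_ae (Filter.Eventually.of_forall fun ω => (exp_pos _).le)
    (hZ.abs.div_const C).exp.aestronglyMeasurable]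
  exact ENNReal.toReal_le_of_le_ofReal zero_le_two (by simpa using hψ)

lemma integrable_of_lintegral_exp_abs_div_le (hZ : AEMeasurable Z μ) (hC : 0 < C)
    (hψ : ∫⁻ ω, ENNReal.ofReal (exp (|Z ω| / C)) ∂μ ≤ 2) : Integrable Z μ := by
  refine ((integrable_exp_abs_div_of_lintegral_le hZ hψ).const_mul C).mono' hZ.aestronglyMeasurable
    (Filter.Eventually.of_forall fun ω => ?_)
  have h := add_one_le_exp (|Z ω| / C)
  rw [norm_eq_abs, ← div_le_iff₀' hC]
  linarith

lemma integrable_exp_mul_of_lintegral_exp_abs_div_le (hZ : AEMeasurable Z μ)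
    (hψ : ∫⁻ ω, ENNReal.ofReal (exp (|Z ω| / C)) ∂μ ≤ 2) {t : ℝ} (ht : |t| ≤ 1 / C) :
    Integrable (fun ω => exp (t * Z ω)) μ := by
  refine (integrable_exp_abs_div_of_lintegral_le hZ hψ).mono'
    (hZ.const_mul t).exp.aestronglyMeasurable (Filter.Eventually.of_forall fun ω => ?_)
  rw [norm_of_nonneg (exp_pos _).le, exp_le_exp]
  calc t * Z ω ≤ |t| * |Z ω| := (le_abs_self _).trans (abs_mul t (Z ω)).le
    _ ≤ 1 / C * |Z ω| := by gcongr
    _ = |Z ω| / C := by ring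

lemma mgf_le_exp_of_lintegral_exp_abs_div_le [IsProbabilityMeasure μ] (hZ : AEMeasurable Z μ)
    (hC : 0 < C) (hmean : ∫ ω, Z ω ∂μ = 0)
    (hψ : ∫⁻ ω, ENNReal.ofReal (exp (|Z ω| / C)) ∂μ ≤ 2) {t : ℝ} (ht : |t| ≤ 1 / (2 * C)) :
    mgf Z μ t ≤ exp (32 * C ^ 2 * t ^ 2) := by
  set g := fun ω => exp (|Z ω| / C)
  have hg := integrable_exp_abs_div_of_lintegral_le hZ hψ
  -- Taylor: `exp(tZ) ≤ 1 + tZ + t² Z² exp|tZ|`, and `Z² exp|tZ| ≤ 16 C² exp(|Z|/C)`.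
  have hpt : ∀ ω, exp (t * Z ω) ≤ 1 + t * Z ω + t ^ 2 * (16 * C ^ 2 * g ω) := by
    intro ω
    set s := |Z ω| / (2 * C)
    have hs : 0 ≤ s := by positivity
    have htZ : |t * Z ω| ≤ s := by
      rw [abs_mul]
      calc |t| * |Z ω| ≤ 1 / (2 * C) * |Z ω| := by gcongr
        _ = s := by ring
    have hZs : Z ω ^ 2 = 4 * C ^ 2 * s ^ 2 := by
      rw [← sq_abs]; simp only [s]; field_simp; norm_num
    have hgs : g ω = exp s * exp s := by
      rw [← exp_add]; simp only [g, s]; congr 1; field_simp; ring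
    have hsq := Real.sq_le_four_mul_exp hs
    have hexp : exp |t * Z ω| ≤ exp s := exp_le_exp.2 htZ
    calc exp (t * Z ω) ≤ 1 + t * Z ω + t ^ 2 * (Z ω ^ 2 * exp |t * Z ω|) := by
          have := Real.exp_le_one_add_add_sq_mul_exp_abs (t * Z ω)
          rwa [mul_pow, mul_assoc] at this
      _ ≤ 1 + t * Z ω + t ^ 2 * (16 * C ^ 2 * g ω) := by
          rw [hZs, hgs]
          gcongr 1 + t * Z ω + t ^ 2 * ?_
          nlinarith [exp_pos s, mul_le_mul hsq hexp (exp_pos _).le (by positivity)]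
  have hZi := integrable_of_lintegral_exp_abs_div_le hZ hC hψ
  calc mgf Z μ t ≤ ∫ ω, (1 + t * Z ω + t ^ 2 * (16 * C ^ 2 * g ω)) ∂μ :=
        integral_mono (integrable_exp_mul_of_lintegral_exp_abs_div_le hZ hψ
          (ht.trans (by gcongr; linarith))) (((integrable_const 1).add (hZi.const_mul t)).add
            ((hg.const_mul _).const_mul _)) hpt
    _ = 1 + 16 * C ^ 2 * t ^ 2 * ∫ ω, g ω ∂μ := by
        have h₁ : Integrable (fun ω => 1 + t * Z ω) μ := (integrable_const 1).add (hZi.const_mul t)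
        have h₂ : Integrable (fun ω => t ^ 2 * (16 * C ^ 2 * g ω)) μ := (hg.const_mul _).const_mul _
        rw [integral_add h₁ h₂, integral_add (integrable_const 1) (hZi.const_mul t),
          integral_const_mul, integral_const_mul, integral_const_mul, hmean]
        simp only [integral_const, probReal_univ, smul_eq_mul]
        ring
    _ ≤ 1 + 32 * C ^ 2 * t ^ 2 := by
        nlinarith [integral_exp_abs_div_le hZ hψ, sq_nonneg (C * t)]
    _ ≤ exp (32 * C ^ 2 * t ^ 2) := by linarith [add_one_le_exp (32 * C ^ 2 * t ^ 2)]

end SubExponential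

section Bernstein

variable [IsProbabilityMeasure μ] {n : ℕ}

lemma measureReal_le_sum_le_of_iid {Z : Fin n → Ω → ℝ} (hmeas : ∀ i, Measurable (Z i))
    (hindep : iIndepFun Z μ) {i₀ : Fin n} (hid : ∀ i, IdentDistrib (Z i) (Z i₀) μ μ)
    (hC : 0 < C) (hmean : ∫ ω, Z i₀ ω ∂μ = 0)
    (hψ : ∫⁻ ω, ENNReal.ofReal (exp (|Z i₀ ω| / C)) ∂μ ≤ 2)
    {t : ℝ} (ht₀ : 0 ≤ t) (ht : t ≤ 1 / (2 * C)) (ε : ℝ) :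
    μ.real {ω | n * ε ≤ ∑ i, Z i ω} ≤ exp (-(n * (t * ε - 32 * C ^ 2 * t ^ 2))) := by
  have hψ_t : |t| ≤ 1 / C :=
    (abs_of_nonneg ht₀).trans_le (ht.trans (by gcongr; linarith))
  have hint : ∀ i, Integrable (fun ω => exp (t * Z i ω)) μ := fun i =>
    ((hid i).comp (measurable_const_mul t).exp).integrable_iff.2
      (integrable_exp_mul_of_lintegral_exp_abs_div_le (hmeas i₀).aemeasurable hψ hψ_t)
  have hmgf : mgf (∑ i, Z i) μ t ≤ exp (32 * C ^ 2 * t ^ 2) ^ n := by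
    rw [mgf_sum_of_identDistrib hmeas hindep (fun i _ j _ => (hid i).trans (hid j).symm)
      (Finset.mem_univ i₀), Finset.card_univ, Fintype.card_fin]
    exact pow_le_pow_left₀ mgf_nonneg (mgf_le_exp_of_lintegral_exp_abs_div_le
      (hmeas i₀).aemeasurable hC hmean hψ ((abs_of_nonneg ht₀).trans_le ht)) n
  have hchernoff := measure_ge_le_exp_mul_mgf (X := ∑ i, Z i) (μ := μ) (n * ε) ht₀
    (hindep.integrable_exp_mul_sum hmeas fun i _ => hint i)
  simp only [Finset.sum_apply] at hchernoff
  calc μ.real {ω | n * ε ≤ ∑ i, Z i ω} ≤ exp (-t * (n * ε)) * exp (32 * C ^ 2 * t ^ 2) ^ n :=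
        hchernoff.trans (by gcongr)
    _ = exp (-(n * (t * ε - 32 * C ^ 2 * t ^ 2))) := by
        rw [← exp_nat_mul, ← exp_add]; ring_nf

lemma measureReal_lt_abs_mean_sub_le_of_iid (hn : 0 < n) {W : Fin n → Ω → ℝ}
    (hmeas : ∀ i, Measurable (W i)) (hindep : iIndepFun W μ) {i₀ : Fin n}
    (hid : ∀ i, IdentDistrib (W i) (W i₀) μ μ) (hC : 0 < C)
    (hψ : ∫⁻ ω, ENNReal.ofReal (exp (|W i₀ ω - ∫ ω', W i₀ ω' ∂μ| / C)) ∂μ ≤ 2)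
    {t : ℝ} (ht₀ : 0 ≤ t) (ht : t ≤ 1 / (2 * C)) (ε : ℝ) :
    μ.real {ω | ε < |(n : ℝ)⁻¹ * ∑ i, W i ω - ∫ ω', W i₀ ω' ∂μ|} ≤
      2 * exp (-(n * (t * ε - 32 * C ^ 2 * t ^ 2))) := by
  set m := ∫ ω', W i₀ ω' ∂μ
  have hZint : Integrable (fun ω => W i₀ ω - m) μ :=
    integrable_of_lintegral_exp_abs_div_le ((hmeas i₀).sub_const m).aemeasurable hC hψ
  have hWint : Integrable (W i₀) μ :=
    (hZint.add (integrable_const m)).congr (Filter.Eventually.of_forall fun ω => by simp)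
  have hmean : ∫ ω, (W i₀ ω - m) ∂μ = 0 := by
    rw [integral_sub hWint (integrable_const m)]; simp [m]
  have hupper := measureReal_le_sum_le_of_iid (Z := fun i ω => W i ω - m)
    (fun i => (hmeas i).sub_const m) (hindep.comp _ fun _ => measurable_id.sub_const m)
    (fun i => (hid i).comp (measurable_id.sub_const m)) hC hmean hψ ht₀ ht ε
  have hlower := measureReal_le_sum_le_of_iid (Z := fun i ω => -(W i ω - m))
    (fun i => ((hmeas i).sub_const m).neg)
    (hindep.comp _ fun _ => (measurable_id.sub_const m).neg)
    (fun i => (hid i).comp (measurable_id.sub_const m).neg) hC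
    (by rw [integral_neg, hmean, neg_zero]) (by simpa only [abs_neg] using hψ) ht₀ ht ε
  have hsub : {ω | ε < |(n : ℝ)⁻¹ * ∑ i, W i ω - m|} ⊆
      {ω | n * ε ≤ ∑ i, (W i ω - m)} ∪ {ω | n * ε ≤ ∑ i, -(W i ω - m)} := by
    intro ω hω
    have hn' : (0 : ℝ) < n := Nat.cast_pos.2 hn
    have hcentre : (n : ℝ)⁻¹ * ∑ i, W i ω - m = (n : ℝ)⁻¹ * ∑ i, (W i ω - m) := by
      simp only [Finset.sum_sub_distrib, Finset.sum_const, Finset.card_univ, Fintype.card_fin,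
        nsmul_eq_mul]
      field_simp
    change ε < |_| at hω
    rw [hcentre, abs_mul, abs_inv, Nat.abs_cast, ← div_eq_inv_mul, lt_div_iff₀' hn'] at hω
    rw [Set.mem_union, Set.mem_ofPred_eq, Set.mem_ofPred_eq, Finset.sum_neg_distrib]
    rcases abs_cases (∑ i, (W i ω - m)) with ⟨h, _⟩ | ⟨h, _⟩ <;> rw [h] at hω
    · exact Or.inl hω.le
    · exact Or.inr hω.le
  calc _ ≤ _ := measureReal_mono hsub
    _ ≤ _ := measureReal_union_le _ _
    _ ≤ _ := by linarith

end Bernstein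

lemma measureReal_exists_lt_abs_gramDeviation_le [IsProbabilityMeasure μ] {n p : ℕ} (hn : 0 < n)
    {x : Fin n → Ω → Fin p → ℝ} (hxm : ∀ i, Measurable (x i)) (hxind : iIndepFun x μ)
    {i₀ : Fin n} (hxid : ∀ i, IdentDistrib (x i) (x i₀) μ μ) (hC : 0 < C)
    (hψ : ∀ j k, ∫⁻ ω, ENNReal.ofReal (exp
      (|x i₀ ω j * x i₀ ω k - ∫ ω', x i₀ ω' j * x i₀ ω' k ∂μ| / C)) ∂μ ≤ 2)
    {δ K : ℝ} (hδ : 0 < δ) (hK : 1 ≤ K) :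
    μ.real {ω | ∃ j k, δ / K < |gramDeviation (fun i => x i ω)
        (fun j k => ∫ ω', x i₀ ω' j * x i₀ ω' k ∂μ) j k|} ≤
      2 * p ^ 2 * exp (-(bernsteinRate C δ * n / K ^ 2)) := by
  set τ := min (δ / (64 * C ^ 2)) (1 / (2 * C))
  have hτ : 0 < τ := by positivity
  have hτK : τ / K ≤ 1 / (2 * C) := (div_le_self hτ.le hK).trans (min_le_right _ _)
  -- Bernstein at `t = τ / K`, `ε = δ / K`; `τ ≤ δ / (64 C²)` makes `32 C² t² ≤ t ε / 2`
  have hrate : bernsteinRate C δ * n / K ^ 2 ≤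
      n * (τ / K * (δ / K) - 32 * C ^ 2 * (τ / K) ^ 2) := by
    have hτδ : 64 * C ^ 2 * τ ≤ δ := by
      rw [← le_div_iff₀' (by positivity)]; exact min_le_left _ _
    have hK0 : 0 < K := by linarith
    rw [show n * (τ / K * (δ / K) - 32 * C ^ 2 * (τ / K) ^ 2) =
      n * (τ * δ - 32 * C ^ 2 * τ ^ 2) / K ^ 2 by field_simp]
    refine div_le_div_of_nonneg_right ?_ (sq_nonneg K)
    rw [show bernsteinRate C δ = τ * δ / 2 from rfl]
    nlinarith [mul_le_mul_of_nonneg_left hτδ (by positivity : (0 : ℝ) ≤ τ * n)]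
  have hentry : ∀ j k, μ.real {ω | δ / K < |gramDeviation (fun i => x i ω)
      (fun j k => ∫ ω', x i₀ ω' j * x i₀ ω' k ∂μ) j k|} ≤
        2 * exp (-(bernsteinRate C δ * n / K ^ 2)) := by
    intro j k
    have hg : Measurable fun y : Fin p → ℝ => y j * y k := by fun_prop
    refine (measureReal_lt_abs_mean_sub_le_of_iid hn (W := fun i ω => x i ω j * x i ω k)
      (fun i => hg.comp (hxm i)) (hxind.comp _ fun _ => hg) (fun i => (hxid i).comp hg) hC
      (hψ j k) (by positivity) hτK (δ / K)).trans ?_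
    gcongr
  calc _ = μ.real (⋃ j, ⋃ k, {ω | δ / K < |gramDeviation (fun i => x i ω)
          (fun j k => ∫ ω', x i₀ ω' j * x i₀ ω' k ∂μ) j k|}) := by
        simp only [Set.ofPred_exists]
    _ ≤ ∑ j, ∑ k, μ.real {ω | δ / K < |gramDeviation (fun i => x i ω)
          (fun j k => ∫ ω', x i₀ ω' j * x i₀ ω' k ∂μ) j k|} :=
        (measureReal_iUnion_fintype_le _).trans
          (sum_le_sum fun j _ => measureReal_iUnion_fintype_le _)
    _ ≤ ∑ _j : Fin p, ∑ _k : Fin p, 2 * exp (-(bernsteinRate C δ * n / K ^ 2)) := by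
        gcongr with j _ k _; exact hentry j k
    _ = _ := by simp only [sum_const, card_univ, Fintype.card_fin, nsmul_eq_mul]; ring

lemma ofReal_one_sub_le_measure_of_compl_subset [IsProbabilityMeasure μ] {B S : Set Ω} {r : ℝ}
    (hB : μ.real B ≤ r) (hS : Bᶜ ⊆ S) :
    ENNReal.ofReal (1 - r) ≤ μ S := by
  calc ENNReal.ofReal (1 - r) ≤ ENNReal.ofReal (1 - μ.real B) := by gcongr
    _ = 1 - μ B := by rw [ENNReal.ofReal_sub _ measureReal_nonneg, ENNReal.ofReal_one,
          ofReal_measureReal]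
    _ ≤ μ Bᶜ := by
        rw [tsub_le_iff_left, ← measure_univ (μ := μ)]; exact measure_univ_le_add_compl B
    _ ≤ μ S := measure_mono hS

end Probability

noncomputable def sampleSizeThreshold (α C₂ : ℝ) : ℝ := 16 * max 1 (16 * C₂ / α) ^ 2 / α

lemma sampleSizeThreshold_pos {α : ℝ} (hα : 0 < α) (C₂ : ℝ) : 0 < sampleSizeThreshold α C₂ := by
  unfold sampleSizeThreshold; positivity

lemma le_mul_of_div_le_mul_rpow_neg {a b c n : ℝ} (hb : 0 ≤ b) (hc : 0 ≤ c) (hn : 1 ≤ n)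
    (h : a / n ≤ b * n ^ (-c)) : a ≤ b * n := by
  have hnc : n ^ (-c) ≤ 1 := rpow_le_one_of_one_le_of_nonpos hn (neg_nonpos.2 hc)
  rw [div_le_iff₀ (by linarith)] at h
  nlinarith [mul_le_mul_of_nonneg_left hnc hb]

lemma four_mul_mul_sq_le_of_pow_seven_le {α C₂ K L n : ℝ} (hα : 0 < α)
    (hK : 0 ≤ K) (hL : 1 / 2 ≤ L) (hcond : (K * L) ^ 7 ≤ C₂ * n)
    (hn : sampleSizeThreshold α C₂ ≤ n) : 4 * L * K ^ 2 ≤ α * n := by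
  set M := max 1 (16 * C₂ / α)
  set x := K * L
  have hM : 1 ≤ M := le_max_left _ _
  have hx : 0 ≤ x := by positivity
  have hsplit : M * x ^ 2 ≤ M ^ 3 + x ^ 7 := by
    rcases le_total x M with hxM | hMx
    · calc M * x ^ 2 ≤ M * M ^ 2 := by gcongr
        _ = M ^ 3 := by ring
        _ ≤ M ^ 3 + x ^ 7 := le_add_of_nonneg_right (by positivity)
    · calc M * x ^ 2 ≤ x * x ^ 2 := by gcongr
        _ ≤ x ^ 7 := by rw [← pow_succ']; exact pow_le_pow_right₀ (hM.trans hMx) (by norm_num)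
        _ ≤ M ^ 3 + x ^ 7 := le_add_of_nonneg_left (by positivity)
  have hC₂M : 16 * C₂ ≤ α * M := by rw [← div_le_iff₀' hα]; exact le_max_right _ _
  have hnM : 16 * M ^ 2 ≤ α * n := by
    unfold sampleSizeThreshold at hn; rwa [div_le_iff₀' hα] at hn
  have hn0 : 0 ≤ n := (sampleSizeThreshold_pos hα C₂).le.trans hn
  have hLK : 4 * L * K ^ 2 ≤ 8 * x ^ 2 := by
    nlinarith [mul_nonneg (mul_nonneg (by linarith : (0 : ℝ) ≤ L) (sq_nonneg K))
      (by linarith : (0 : ℝ) ≤ 2 * L - 1)]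
  have h8 : M * (8 * x ^ 2) ≤ M * (α * n) := by
    nlinarith [mul_le_mul_of_nonneg_right hC₂M hn0]
  exact hLK.trans (le_of_mul_le_mul_left h8 (by linarith))

lemma min_one_two_mul_sq_mul_exp_le {α C₂ K : ℝ} (hα : 0 < α) (hK : 0 < K)
    {n p : ℕ} (hn : 0 < n) (hp : 0 < p) (hcond : (K * log p) ^ 7 ≤ C₂ * n) :
    min 1 (2 * p ^ 2 * exp (-(α * n / K ^ 2))) ≤
      sampleSizeThreshold α C₂ * (n : ℝ)⁻¹ + exp (-log p) := by
  have hn' : (0 : ℝ) < n := Nat.cast_pos.2 hn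
  have hN := (sampleSizeThreshold_pos hα C₂).le
  rcases Nat.lt_or_ge 1 p with hp2 | hp1
  swap
  · obtain rfl : p = 1 := by omega
    simp only [Nat.cast_one, log_one, neg_zero, exp_zero]
    exact (min_le_left _ _).trans (le_add_of_nonneg_left (by positivity))
  rcases lt_or_ge (n : ℝ) (sampleSizeThreshold α C₂) with hsmall | hlarge
  · refine (min_le_left _ _).trans (le_add_of_le_of_nonneg ?_ (exp_pos _).le)
    rw [← div_eq_mul_inv, one_le_div hn']; exact hsmall.le
  have hp' : (2 : ℝ) ≤ p := by exact_mod_cast hp2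
  have hL : 1 / 2 ≤ log p :=
    by linarith [log_two_gt_d9, log_le_log two_pos hp']
  have hE : 4 * log p ≤ α * n / K ^ 2 := by
    rw [le_div_iff₀ (by positivity)]
    exact four_mul_mul_sq_le_of_pow_seven_le hα hK.le hL hcond hlarge
  have hp4 : exp (-(α * n / K ^ 2)) ≤ (p ^ 4 : ℝ)⁻¹ := by
    rw [← exp_log (by positivity : (0 : ℝ) < p), ← exp_nat_mul, ← exp_neg]
    exact exp_le_exp.2 (by push_cast; linarith)
  refine (min_le_right _ _).trans (le_add_of_nonneg_of_le (by positivity) ?_)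
  rw [exp_neg (log _), exp_log (by positivity)]
  calc 2 * (p : ℝ) ^ 2 * exp (-(α * n / K ^ 2)) ≤ 2 * (p : ℝ) ^ 2 * ((p : ℝ) ^ 4)⁻¹ := by gcongr
    _ = 2 / (p : ℝ) * (p : ℝ)⁻¹ := by field_simp
    _ ≤ 1 * (p : ℝ)⁻¹ := by gcongr; rw [div_le_one (by positivity)]; exact hp'
    _ = (p : ℝ)⁻¹ := one_mul _

/-- Lemma `LemCovering`. Let `Γ = XᵀX/n − Σ_x` with i.i.d. zero-mean rows
satisfying (A1)–(A3). For any fixed `δ > 0`, if `(2k log p)⁷/n ≤ C₂ n^{−c₂}`, then with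
probability at least `1 − C n^{−c} − exp(−c' log p)`, `|vᵀΓv| ≤ δ` simultaneously for all
`2k`-sparse vectors `v` with `‖v‖₂ ≤ 1`. -/
theorem stmt12 :
    ∃ C c c' : ℝ → ℝ → ℝ → ℝ → ℝ → ℝ → ℝ,
      (∀ δ c₁ c₂ C₁ C₂ σxx : ℝ, 0 < δ → 0 < c₁ → 0 < c₂ → 0 < C₁ → 0 < C₂ → 0 < σxx →
        0 < C δ c₁ c₂ C₁ C₂ σxx ∧ 0 < c δ c₁ c₂ C₁ C₂ σxx ∧ 0 < c' δ c₁ c₂ C₁ C₂ σxx) ∧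
      ∀ (Ω : Type) (_ : MeasurableSpace Ω) (μ : Measure Ω), IsProbabilityMeasure μ →
      ∀ (n p k : ℕ) (hn : 0 < n), 0 < p →
      ∀ (x : Fin n → Ω → Fin p → ℝ) (δ c₁ c₂ C₁ C₂ σxx : ℝ),
      0 < δ → 0 < c₁ → 0 < c₂ → 0 < C₁ → 0 < C₂ → 0 < σxx →
      (∀ i, Measurable (x i)) →
      iIndepFun x μ →
      (∀ i, IdentDistrib (x i) (x ⟨0, hn⟩) μ μ) →
      (∀ i j, ∫ ω, x i ω j ∂μ = 0) →
      (∀ j k' : Fin p, c₁ ≤ variance (fun ω => x ⟨0, hn⟩ ω j * x ⟨0, hn⟩ ω k') μ) →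
      (∀ j k' : Fin p,
        ∫⁻ ω, ENNReal.ofReal (Real.exp
            (|x ⟨0, hn⟩ ω j * x ⟨0, hn⟩ ω k' -
              ∫ ω', x ⟨0, hn⟩ ω' j * x ⟨0, hn⟩ ω' k' ∂μ| / C₁)) ∂μ ≤ 2) →
      (∀ j k' : Fin p, variance (fun ω => x ⟨0, hn⟩ ω j * x ⟨0, hn⟩ ω k') μ ≤ σxx ^ 2) →
      -- sample-size condition
      (2 * (k : ℝ) * Real.log p) ^ 7 / n ≤ C₂ * (n : ℝ) ^ (-c₂) →
      ENNReal.ofReal (1 - C δ c₁ c₂ C₁ C₂ σxx * (n : ℝ) ^ (-(c δ c₁ c₂ C₁ C₂ σxx)) -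
          Real.exp (-(c' δ c₁ c₂ C₁ C₂ σxx) * Real.log p)) ≤
        μ {ω | ∀ v : Fin p → ℝ,
            (Finset.univ.filter fun j => v j ≠ 0).card ≤ 2 * k →
            (∑ j, v j ^ 2) ≤ 1 →
            |(n : ℝ)⁻¹ * (∑ i, (∑ j, x i ω j * v j) ^ 2) -
              ∑ j, ∑ k', v j * (∫ ω', x ⟨0, hn⟩ ω' j * x ⟨0, hn⟩ ω' k' ∂μ) * v k'| ≤ δ} := by
  refine ⟨fun δ _ _ C₁ C₂ _ => sampleSizeThreshold (bernsteinRate C₁ δ) C₂,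
    fun _ _ _ _ _ _ => 1, fun _ _ _ _ _ _ => 1,
    fun δ _ _ C₁ C₂ _ hδ _ _ hC₁ _ _ =>
      ⟨sampleSizeThreshold_pos (bernsteinRate_pos hC₁ hδ) C₂, one_pos, one_pos⟩, ?_⟩
  intro Ω _ μ _ n p k hn hp x δ _ c₂ C₁ C₂ _ hδ _ hc₂ hC₁ hC₂ _ hxm hxind hxid _ _ hψ _ hcond
  rw [rpow_neg_one, neg_mul, one_mul, sub_sub]
  rcases Nat.eq_zero_or_pos k with rfl | hk
  · refine ofReal_one_sub_le_measure_of_compl_subset (B := ∅)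
      (by simpa using add_nonneg (mul_nonneg
        (sampleSizeThreshold_pos (bernsteinRate_pos hC₁ hδ) C₂).le (by positivity)) (exp_pos _).le)
      fun ω _ v hv _ => ?_
    obtain rfl : v = 0 := by simpa [filter_eq_empty_iff, funext_iff] using hv
    simpa using hδ.le
  set K : ℝ := 2 * k
  have hK : 2 ≤ K := by simp only [K]; norm_cast; omega
  refine ofReal_one_sub_le_measure_of_compl_subset (B := {ω | ∃ j k', δ / K < |gramDeviation
    (fun i => x i ω) (fun j k' => ∫ ω', x ⟨0, hn⟩ ω' j * x ⟨0, hn⟩ ω' k' ∂μ) j k'|}) ?_ ?_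
  · have hsample : (K * log p) ^ 7 ≤ C₂ * n :=
      le_mul_of_div_le_mul_rpow_neg hC₂.le hc₂.le (by exact_mod_cast hn) hcond
    exact (le_min measureReal_le_one (measureReal_exists_lt_abs_gramDeviation_le hn hxm hxind hxid
      hC₁ hψ hδ (by linarith))).trans
      (min_one_two_mul_sq_mul_exp_le (bernsteinRate_pos hC₁ hδ) (by linarith) hn hp hsample)
  · intro ω hω v hv hv1
    simp only [Set.mem_compl_iff, Set.mem_ofPred_eq, not_exists, not_lt] at hω
    rw [quadForm_gramDeviation (fun i => x i ω)]
    calc _ ≤ δ / K * ((2 * k : ℕ) : ℝ) := abs_quadForm_le_of_sparse (by positivity) hω hv hv1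
      _ = δ := by simp only [K]; push_cast; field_simp
end

section
/- Let X and Y be independent real random variables, where X has a probability density that is symmetric about 0 and unimodal (nonincreasing on [0, ∞)). Let m ≥ 0 satisfy P(|X| ≥ m) ≥ 1/2. Then for every M ∈ ℝ, P(|X + Y − M| ≥ m) ≥ 1/2. In particular, taking m = MAD(X) and M = med(X + Y), this yields MAD(X) ≤ MAD(X + Y), where for a random variable Z, med(Z) denotes a value M with P(Z ≤ M) ≥ 1/2 and P(Z ≥ M) ≥ 1/2, and MAD(Z) := med(|Z − med(Z)|). -/
/-!
Anderson's inequality on the line: if `g` is even and nonincreasing on `[0, ∞)`, then among all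
intervals of a given length the one centred at `0` carries the most `g`-mass. Indeed, for `c ≥ 0`
the reflection `x ↦ c - x` maps the part of `(c - r, c + r]` outside `(-r, r]` onto the part of
`(-r, r]` outside `(c - r, c + r]`, moving every point closer to `0`. Conditioning on `Y` then gives
`P(|X + Y - M| < m) ≤ P(|X| < m) ≤ 1/2`.

If `|X + Y - M|` had a median `r < m`, the same argument would give `P(|X| ≤ r) ≥ 1/2`. But
unimodality gives the gap `r < |X| < m` positive mass as soon as `P(|X| ≥ m) > 0`, so
`P(|X| ≤ r) < P(|X| < m) ≤ 1/2`.
-/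

open MeasureTheory ProbabilityTheory Metric Set
open scoped ENNReal

theorem setLIntegral_Ioc_add_Ioc {μ : Measure ℝ} (f : ℝ → ℝ≥0∞) {a b c : ℝ} (hab : a ≤ b)
    (hbc : b ≤ c) :
    ∫⁻ x in Ioc a b, f x ∂μ + ∫⁻ x in Ioc b c, f x ∂μ = ∫⁻ x in Ioc a c, f x ∂μ := by
  rw [← lintegral_union measurableSet_Ioc (Ioc_disjoint_Ioc_of_le le_rfl),
    Ioc_union_Ioc_eq_Ioc hab hbc]

def IsSymmUnimodal {α : Type*} [Preorder α] (g : ℝ → α) : Prop :=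
  ∀ ⦃x y : ℝ⦄, |x| ≤ |y| → g y ≤ g x

namespace IsSymmUnimodal

section Order

variable {α : Type*} {g : ℝ → α}

theorem of_even_of_antitoneOn [Preorder α] (heven : ∀ t, g (-t) = g t)
    (hmono : AntitoneOn g (Ici 0)) : IsSymmUnimodal g := by
  have habs : ∀ t, g |t| = g t := fun t => by rcases abs_choice t with h | h <;> simp [h, heven]
  intro x y hxy
  rw [← habs x, ← habs y]
  exact hmono (abs_nonneg x) (abs_nonneg y) hxy

theorem comp_monotone [Preorder α] {β : Type*} [Preorder β] {φ : α → β} (hg : IsSymmUnimodal g)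
    (hφ : Monotone φ) : IsSymmUnimodal (φ ∘ g) :=
  fun _ _ h => hφ (hg h)

theorem apply_neg [PartialOrder α] (hg : IsSymmUnimodal g) (x : ℝ) : g (-x) = g x :=
  le_antisymm (hg (abs_neg x).ge) (hg (abs_neg x).le)

end Order

variable {g : ℝ → ℝ≥0∞}

theorem setLIntegral_Ioc_le_Ico_const_sub (hg : IsSymmUnimodal g) {a b c : ℝ} (hc : 0 ≤ c)
    (hca : c ≤ 2 * a) : ∫⁻ x in Ioc a b, g x ≤ ∫⁻ x in Ico (c - b) (c - a), g x :=
  calc ∫⁻ x in Ioc a b, g x ≤ ∫⁻ x in Ioc a b, g (c - x) :=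
        setLIntegral_mono' measurableSet_Ioc fun x hx =>
          hg ((abs_sub_le_iff.2 ⟨by linarith [hx.1], by linarith⟩).trans (le_abs_self x))
    _ = ∫⁻ x in Ico (c - b) (c - a), g x := by
        rw [← preimage_const_sub_Ioc]
        simpa using ((Measure.measurePreserving_sub_left volume c).setLIntegral_comp_preimage_emb
          (MeasurableEquiv.subLeft c).measurableEmbedding (fun y => g (c - y)) (Ioc a b)).symm

theorem setLIntegral_Ioc_le_of_nonneg (hg : IsSymmUnimodal g) {c : ℝ} (hc : 0 ≤ c) (r : ℝ) :
    ∫⁻ x in Ioc (c - r) (c + r), g x ≤ ∫⁻ x in Ioc (-r) r, g x := by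
  rcases le_or_gt (2 * r) c with hrc | hcr
  · calc ∫⁻ x in Ioc (c - r) (c + r), g x
          ≤ ∫⁻ x in Ico (c - (c + r)) (c - (c - r)), g x :=
            hg.setLIntegral_Ioc_le_Ico_const_sub hc (by linarith)
      _ = ∫⁻ x in Ioc (-r) r, g x := by
            rw [sub_add_cancel_left, sub_sub_cancel, setLIntegral_congr Ico_ae_eq_Ioc]
  · -- the two intervals overlap in `(c - r, r]`; compare the remaining pieces by reflection
    have hreflect : ∫⁻ x in Ioc r (c + r), g x ≤ ∫⁻ x in Ioc (-r) (c - r), g x := by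
      calc ∫⁻ x in Ioc r (c + r), g x ≤ ∫⁻ x in Ico (c - (c + r)) (c - r), g x :=
            hg.setLIntegral_Ioc_le_Ico_const_sub hc hcr.le
        _ = ∫⁻ x in Ioc (-r) (c - r), g x := by
            rw [sub_add_cancel_left, setLIntegral_congr Ico_ae_eq_Ioc]
    rw [← setLIntegral_Ioc_add_Ioc g (by linarith : c - r ≤ r) (by linarith : r ≤ c + r),
      ← setLIntegral_Ioc_add_Ioc g (by linarith : -r ≤ c - r) (by linarith : c - r ≤ r), add_comm]
    gcongr

theorem setLIntegral_Ioc_neg (hg : IsSymmUnimodal g) (a b : ℝ) :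
    ∫⁻ x in Ioc a b, g x = ∫⁻ x in Ioc (-b) (-a), g x := by
  have := (Measure.measurePreserving_neg volume).setLIntegral_comp_preimage_emb
    (MeasurableEquiv.neg ℝ).measurableEmbedding g (Ioc a b)
  simp only [neg_preimage, neg_Ioc, hg.apply_neg] at this
  exact this.symm.trans (setLIntegral_congr Ico_ae_eq_Ioc)

theorem setLIntegral_Ioc_le (hg : IsSymmUnimodal g) (c r : ℝ) :
    ∫⁻ x in Ioc (c - r) (c + r), g x ≤ ∫⁻ x in Ioc (-r) r, g x := by
  rcases le_total 0 c with hc | hc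
  · exact hg.setLIntegral_Ioc_le_of_nonneg hc r
  · rw [hg.setLIntegral_Ioc_neg, neg_add', neg_sub', sub_neg_eq_add]
    exact hg.setLIntegral_Ioc_le_of_nonneg (neg_nonneg.2 hc) r

theorem withDensity_closedBall_le (hg : IsSymmUnimodal g) (c r : ℝ) :
    volume.withDensity g (closedBall c r) ≤ volume.withDensity g (closedBall 0 r) := by
  simp only [withDensity_apply', Real.closedBall_eq_Icc, zero_sub, zero_add]
  rw [← setLIntegral_congr Ioc_ae_eq_Icc, ← setLIntegral_congr Ioc_ae_eq_Icc]
  exact hg.setLIntegral_Ioc_le c r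

theorem withDensity_ball_le (hg : IsSymmUnimodal g) (c r : ℝ) :
    volume.withDensity g (ball c r) ≤ volume.withDensity g (ball 0 r) := by
  simp only [withDensity_apply', Real.ball_eq_Ioo, zero_sub, zero_add]
  rw [setLIntegral_congr Ioo_ae_eq_Ioc, setLIntegral_congr Ioo_ae_eq_Ioc]
  exact hg.setLIntegral_Ioc_le c r

theorem withDensity_closedBall_lt_ball (hg : IsSymmUnimodal g) {r m : ℝ} (hr : 0 ≤ r)
    (hrm : r < m) (hfin : volume.withDensity g (closedBall 0 r) ≠ ∞)
    (htail : volume.withDensity g (ball 0 m)ᶜ ≠ 0) :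
    volume.withDensity g (closedBall 0 r) < volume.withDensity g (ball 0 m) := by
  set ν := volume.withDensity g
  obtain ⟨y, hy, hgy⟩ : ∃ y ∈ (ball (0 : ℝ) m)ᶜ, g y ≠ 0 := by
    by_contra! h
    exact htail <| (withDensity_apply' g _).trans <|
      (setLIntegral_congr_fun measurableSet_ball.compl h).trans lintegral_zero
  have hgap : ν (Ioo r m) ≠ 0 := by
    have hle : g y * volume (Ioo r m) ≤ ν (Ioo r m) := by
      rw [withDensity_apply', ← setLIntegral_const]
      refine setLIntegral_mono' measurableSet_Ioo fun x hx => hg ?_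
      simp only [mem_compl_iff, mem_ball_zero_iff, Real.norm_eq_abs, not_lt] at hy
      rw [abs_of_pos (hr.trans_lt hx.1)]
      exact hx.2.le.trans hy
    refine (pos_of_ne_zero (mul_ne_zero hgy ?_)).trans_le hle |>.ne'
    simpa [Real.volume_Ioo] using hrm
  have hdisj : Disjoint (closedBall (0 : ℝ) r) (Ioo r m) := by
    refine disjoint_left.2 fun x hx hx' => ?_
    rw [mem_closedBall_zero_iff, Real.norm_eq_abs] at hx
    exact (le_abs_self x).trans hx |>.not_gt hx'.1
  have hsub : closedBall 0 r ∪ Ioo r m ⊆ ball 0 m := by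
    refine union_subset (closedBall_subset_ball hrm) fun x hx => ?_
    rw [mem_ball_zero_iff, Real.norm_eq_abs, abs_of_pos (hr.trans_lt hx.1)]
    exact hx.2
  calc ν (closedBall 0 r) < ν (closedBall 0 r) + ν (Ioo r m) := ENNReal.lt_add_right hfin hgap
    _ = ν (closedBall 0 r ∪ Ioo r m) := (measure_union hdisj measurableSet_Ioo).symm
    _ ≤ ν (ball 0 m) := measure_mono hsub

end IsSymmUnimodal

theorem measure_add_mem_le_of_indepFun {Ω G : Type*} [MeasurableSpace Ω] {μ : Measure Ω}
    [IsProbabilityMeasure μ] [Add G] [MeasurableSpace G] [MeasurableAdd₂ G] {X Y : Ω → G}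
    (hX : Measurable X) (hY : Measurable Y) (hXY : IndepFun X Y μ) {K : Set G}
    (hK : MeasurableSet K) {q : ℝ≥0∞} (hq : ∀ y, μ.map X ((· + y) ⁻¹' K) ≤ q) :
    μ {ω | X ω + Y ω ∈ K} ≤ q := by
  have : IsProbabilityMeasure (μ.map Y) := Measure.isProbabilityMeasure_map hY.aemeasurable
  have hS : MeasurableSet {p : G × G | p.1 + p.2 ∈ K} := measurable_add hK
  calc μ {ω | X ω + Y ω ∈ K} = (μ.map X).prod (μ.map Y) {p : G × G | p.1 + p.2 ∈ K} := by
        rw [← (indepFun_iff_map_prod_eq_prod_map_map hX.aemeasurable hY.aemeasurable).1 hXY,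
          Measure.map_apply (hX.prodMk hY) hS]
        rfl
    _ = ∫⁻ y, μ.map X ((· + y) ⁻¹' K) ∂μ.map Y := Measure.prod_apply_symm hS
    _ ≤ ∫⁻ _, q ∂μ.map Y := lintegral_mono hq
    _ = q := by simp

theorem half_le_prob_compl_iff {Ω : Type*} [MeasurableSpace Ω] {μ : Measure Ω}
    [IsProbabilityMeasure μ] {s : Set Ω} (hs : MeasurableSet s) :
    1 / 2 ≤ μ sᶜ ↔ μ s ≤ 1 / 2 := by
  rw [prob_compl_eq_one_sub hs, one_div, ENNReal.le_sub_iff_add_le_left (by simp) prob_le_one,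
    ← ENNReal.le_sub_iff_add_le_right (by simp) (by simp), ENNReal.one_sub_inv_two]

section IndependentSum

variable {Ω : Type*} [MeasurableSpace Ω] {μ : Measure Ω} {X Y : Ω → ℝ} {g : ℝ → ℝ≥0∞}

theorem measure_abs_lt_eq_map_ball (hX : Measurable X) (r : ℝ) :
    μ {ω | |X ω| < r} = μ.map X (ball 0 r) := by
  rw [Measure.map_apply hX measurableSet_ball]
  simp only [preimage, mem_ball, dist_zero_right, Real.norm_eq_abs]

theorem measure_abs_le_eq_map_closedBall (hX : Measurable X) (r : ℝ) :
    μ {ω | |X ω| ≤ r} = μ.map X (closedBall 0 r) := by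
  rw [Measure.map_apply hX measurableSet_closedBall]
  simp only [preimage, mem_closedBall, dist_zero_right, Real.norm_eq_abs]

theorem measure_le_abs_eq_map_compl_ball (hX : Measurable X) (r : ℝ) :
    μ {ω | r ≤ |X ω|} = μ.map X (ball 0 r)ᶜ := by
  rw [Measure.map_apply hX measurableSet_ball.compl]
  simp only [preimage, mem_compl_iff, mem_ball, dist_zero_right, Real.norm_eq_abs, not_lt]

variable [IsProbabilityMeasure μ]

theorem measure_abs_add_sub_lt_le_of_indepFun (hX : Measurable X) (hY : Measurable Y)
    (hXY : IndepFun X Y μ) (hpdf : μ.map X = volume.withDensity g) (hg : IsSymmUnimodal g)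
    (M r : ℝ) : μ {ω | |X ω + Y ω - M| < r} ≤ μ {ω | |X ω| < r} := by
  simp only [measure_abs_lt_eq_map_ball hX, ← Real.dist_eq, ← mem_ball]
  refine measure_add_mem_le_of_indepFun hX hY hXY measurableSet_ball fun y => ?_
  rw [hpdf, preimage_add_right_ball]
  exact hg.withDensity_ball_le _ _

theorem measure_abs_add_sub_le_le_of_indepFun (hX : Measurable X) (hY : Measurable Y)
    (hXY : IndepFun X Y μ) (hpdf : μ.map X = volume.withDensity g) (hg : IsSymmUnimodal g)
    (M r : ℝ) : μ {ω | |X ω + Y ω - M| ≤ r} ≤ μ {ω | |X ω| ≤ r} := by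
  simp only [measure_abs_le_eq_map_closedBall hX, ← Real.dist_eq, ← mem_closedBall]
  refine measure_add_mem_le_of_indepFun hX hY hXY measurableSet_closedBall fun y => ?_
  rw [hpdf, preimage_add_right_closedBall]
  exact hg.withDensity_closedBall_le _ _

theorem half_le_measure_le_abs_iff {Z : Ω → ℝ} (hZ : Measurable Z) (m : ℝ) :
    1 / 2 ≤ μ {ω | m ≤ |Z ω|} ↔ μ {ω | |Z ω| < m} ≤ 1 / 2 := by
  have hcompl : {ω | |Z ω| < m}ᶜ = {ω | m ≤ |Z ω|} := by
    ext
    simp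
  rw [← hcompl, half_le_prob_compl_iff (measurableSet_lt hZ.abs measurable_const)]

theorem half_le_measure_le_abs_add_sub (hX : Measurable X) (hY : Measurable Y)
    (hXY : IndepFun X Y μ) (hpdf : μ.map X = volume.withDensity g) (hg : IsSymmUnimodal g)
    {m : ℝ} (hm : 1 / 2 ≤ μ {ω | m ≤ |X ω|}) (M : ℝ) :
    1 / 2 ≤ μ {ω | m ≤ |X ω + Y ω - M|} :=
  (half_le_measure_le_abs_iff (Z := fun ω => X ω + Y ω - M) (by fun_prop) m).2 <|
    (measure_abs_add_sub_lt_le_of_indepFun hX hY hXY hpdf hg M m).trans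
      ((half_le_measure_le_abs_iff hX m).1 hm)

theorem le_of_half_le_measure_abs_add_sub_le (hX : Measurable X) (hY : Measurable Y)
    (hXY : IndepFun X Y μ) (hpdf : μ.map X = volume.withDensity g) (hg : IsSymmUnimodal g)
    {m : ℝ} (hm : 1 / 2 ≤ μ {ω | m ≤ |X ω|}) {M r : ℝ}
    (hr : 1 / 2 ≤ μ {ω | |X ω + Y ω - M| ≤ r}) : m ≤ r := by
  by_contra! hrm
  have hr0 : 0 ≤ r := by
    obtain ⟨ω, hω⟩ := nonempty_of_measure_ne_zero (hr.trans_lt' (by norm_num)).ne'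
    exact (abs_nonneg _).trans hω
  have hlt : μ {ω | |X ω| ≤ r} < μ {ω | |X ω| < m} := by
    rw [measure_abs_le_eq_map_closedBall hX, measure_abs_lt_eq_map_ball hX, hpdf]
    refine hg.withDensity_closedBall_lt_ball hr0 hrm ?_ ?_
    · rw [← hpdf]
      exact measure_ne_top _ _
    · rw [← hpdf, ← measure_le_abs_eq_map_compl_ball hX]
      exact (hm.trans_lt' (by norm_num)).ne'
  exact (hr.trans (measure_abs_add_sub_le_le_of_indepFun hX hY hXY hpdf hg M r)).not_gt
    (hlt.trans_le ((half_le_measure_le_abs_iff hX m).1 hm))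

end IndependentSum

theorem stmt14_general {Ω : Type*} [MeasurableSpace Ω] (μ : Measure Ω) [IsProbabilityMeasure μ]
    (X Y : Ω → ℝ) (hX : Measurable X) (hY : Measurable Y) (hindep : IndepFun X Y μ)
    (f : ℝ → ℝ)
    (hpdf : μ.map X = MeasureTheory.volume.withDensity fun t => ENNReal.ofReal (f t))
    (heven : ∀ t, f (-t) = f t) (hmono : AntitoneOn f (Set.Ici 0))
    (m : ℝ) (hm : (1 : ℝ≥0∞) / 2 ≤ μ {ω | m ≤ |X ω|}) :
    (∀ M : ℝ, (1 : ℝ≥0∞) / 2 ≤ μ {ω | m ≤ |X ω + Y ω - M|}) ∧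
    -- taking `m` to be a median of `|X|` (no other property of `m` is used above),
    -- any median `MXY` of `X + Y` and any median `mXY` of `|X + Y − MXY|` satisfy `m ≤ mXY`
    (((1 : ℝ≥0∞) / 2 ≤ μ {ω | |X ω| ≤ m}) →
      ∀ MXY mXY : ℝ,
        ((1 : ℝ≥0∞) / 2 ≤ μ {ω | X ω + Y ω ≤ MXY} ∧
          (1 : ℝ≥0∞) / 2 ≤ μ {ω | MXY ≤ X ω + Y ω}) →
        ((1 : ℝ≥0∞) / 2 ≤ μ {ω | |X ω + Y ω - MXY| ≤ mXY} ∧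
          (1 : ℝ≥0∞) / 2 ≤ μ {ω | mXY ≤ |X ω + Y ω - MXY|}) →
        m ≤ mXY) := by
  have hg : IsSymmUnimodal fun t => ENNReal.ofReal (f t) :=
    (IsSymmUnimodal.of_even_of_antitoneOn heven hmono).comp_monotone ENNReal.ofReal_mono
  exact ⟨half_le_measure_le_abs_add_sub hX hY hindep hpdf hg hm,
    fun _ _ _ _ hMAD => le_of_half_le_measure_abs_add_sub_le hX hY hindep hpdf hg hm hMAD.1⟩

/-- Let `X` and `Y` be independent, `X` having a density that is symmetric
about `0` and nonincreasing on `[0,∞)`, and let `m ≥ 0` satisfy `P(|X| ≥ m) ≥ 1/2`. Then for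
every `M ∈ ℝ`, `P(|X + Y − M| ≥ m) ≥ 1/2`. In particular, taking `m = MAD(X)` (a median of
`|X|`) and `M = med(X+Y)`, this yields `MAD(X) ≤ MAD(X+Y)`, where a median of `Z` is any `M`
with `P(Z ≤ M) ≥ 1/2` and `P(Z ≥ M) ≥ 1/2`, and `MAD(Z)` is a median of `|Z − med(Z)|`. -/
theorem stmt14 {Ω : Type*} [MeasurableSpace Ω] (μ : Measure Ω) [IsProbabilityMeasure μ]
    (X Y : Ω → ℝ) (hX : Measurable X) (hY : Measurable Y) (hindep : IndepFun X Y μ)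
    (f : ℝ → ℝ) (hf_nonneg : ∀ t, 0 ≤ f t)
    (hpdf : μ.map X = MeasureTheory.volume.withDensity fun t => ENNReal.ofReal (f t))
    (heven : ∀ t, f (-t) = f t) (hmono : AntitoneOn f (Set.Ici 0))
    (m : ℝ) (hm0 : 0 ≤ m) (hm : (1 : ℝ≥0∞) / 2 ≤ μ {ω | m ≤ |X ω|}) :
    (∀ M : ℝ, (1 : ℝ≥0∞) / 2 ≤ μ {ω | m ≤ |X ω + Y ω - M|}) ∧
    -- taking `m` to be a median of `|X|` (no other property of `m` is used above),
    -- any median `MXY` of `X + Y` and any median `mXY` of `|X + Y − MXY|` satisfy `m ≤ mXY`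
    (((1 : ℝ≥0∞) / 2 ≤ μ {ω | |X ω| ≤ m}) →
      ∀ MXY mXY : ℝ,
        ((1 : ℝ≥0∞) / 2 ≤ μ {ω | X ω + Y ω ≤ MXY} ∧
          (1 : ℝ≥0∞) / 2 ≤ μ {ω | MXY ≤ X ω + Y ω}) →
        ((1 : ℝ≥0∞) / 2 ≤ μ {ω | |X ω + Y ω - MXY| ≤ mXY} ∧
          (1 : ℝ≥0∞) / 2 ≤ μ {ω | mXY ≤ |X ω + Y ω - MXY|}) →
        m ≤ mXY) :=
  stmt14_general μ X Y hX hY hindep f hpdf heven hmono m hm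
end

section
/- Let X be a real random variable with a probability density f that is even (f(−t) = f(t)) and nonincreasing on [0, ∞). Let m ≥ 0 satisfy P(|X| ≥ m) ≥ 1/2. Then for every a ∈ ℝ, P(|X − a| ≥ m) ≥ 1/2. -/
/-! `P(|X - a| < m)` is the `f`-mass of the window `(a - m, a + m)`, so it
suffices that this mass is largest for the centred window. By symmetry take `a ≥ 0`. If `a ≥ 2m`,
translating the window by `-a` moves every point closer to `0`, where `f` is larger. If `a < 2m`,
the two windows share `(a - m, m)`, and the rest `[m, a + m)` of the shifted window is carried
onto `[-m, a - m)` by the translation by `-2m`, which again moves every point closer to `0`. -/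

open MeasureTheory Set
open scoped ENNReal

section EvenAntitone

variable {α β : Type*} [AddCommGroup α] [LinearOrder α] {g : α → β}

lemma Function.Even.apply_abs (heven : Function.Even g) (x : α) : g |x| = g x := by
  rcases abs_choice x with hx | hx <;> rw [hx]
  exact heven x

lemma Function.Even.apply_le_of_abs_le [IsOrderedAddMonoid α] [Preorder β]
    (heven : Function.Even g) (hmono : AntitoneOn g (Ici 0)) {s t : α} (h : |s| ≤ |t|) : g t ≤ g s := by
  rw [← heven.apply_abs s, ← heven.apply_abs t]
  exact hmono (abs_nonneg s) (abs_nonneg t) h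

end EvenAntitone

section WindowMass

variable {g : ℝ → ℝ≥0∞}

lemma setLIntegral_image_add_const_le {s : Set ℝ} (hs : MeasurableSet s) (c : ℝ)
    (h : ∀ x ∈ s, g (x + c) ≤ g x) :
    ∫⁻ x in (· + c) '' s, g x ≤ ∫⁻ x in s, g x := by
  rw [← (measurePreserving_add_right volume c).setLIntegral_comp_emb
    (MeasurableEquiv.addRight c).measurableEmbedding]
  exact setLIntegral_mono' hs h

lemma Function.Even.setLIntegral_Ioo_neg (heven : Function.Even g) (a b : ℝ) :
    ∫⁻ x in Ioo (-b) (-a), g x = ∫⁻ x in Ioo a b, g x := by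
  rw [← image_neg_Ioo, ← (Measure.measurePreserving_neg volume).setLIntegral_comp_emb
    measurableEmbedding_neg]
  exact lintegral_congr fun x => heven x

lemma Function.Even.setLIntegral_Ioo_le_of_nonneg (heven : Function.Even g)
    (hmono : AntitoneOn g (Ici 0)) {m a : ℝ} (ha : 0 ≤ a) :
    ∫⁻ x in Ioo (a - m) (a + m), g x ≤ ∫⁻ x in Ioo (-m) m, g x := by
  have shift_le : ∀ {c x : ℝ}, 0 ≤ c → -c ≤ 2 * x → g (x + c) ≤ g x := fun hc hx =>
    heven.apply_le_of_abs_le hmono <|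
      (abs_le.mpr ⟨by linarith, by linarith⟩).trans (le_abs_self _)
  rcases le_or_gt (2 * m) a with hfar | hnear
  · have hwindow : Ioo (a - m) (a + m) = (· + a) '' Ioo (-m) m := by
      rw [image_add_const_Ioo]
      congr 1 <;> ring
    rw [hwindow]
    exact setLIntegral_image_add_const_le measurableSet_Ioo a
      fun x hx => shift_le ha (by linarith [hx.1])
  · rw [← Ioo_union_Ico_eq_Ioo (by linarith : a - m < m) (by linarith : m ≤ a + m),
      ← Ioc_union_Ioo_eq_Ioo (by linarith : -m ≤ a - m) (by linarith : a - m < m),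
      lintegral_union measurableSet_Ico (Ico_disjoint_Ico_same.mono_left Ioo_subset_Ico_self),
      lintegral_union measurableSet_Ioo (Ioc_disjoint_Ioi_same.mono_right Ioo_subset_Ioi_self),
      add_comm]
    gcongr 1
    have hexcess : Ico m (a + m) = (· + 2 * m) '' Ico (-m) (a - m) := by
      rw [image_add_const_Ico]
      congr 1 <;> ring
    rw [hexcess, setLIntegral_congr Ico_ae_eq_Ioc.symm]
    exact setLIntegral_image_add_const_le measurableSet_Ico (2 * m)
      fun x hx => shift_le (by linarith) (by linarith [hx.1])

lemma Function.Even.setLIntegral_Ioo_le (heven : Function.Even g)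
    (hmono : AntitoneOn g (Ici 0)) (m a : ℝ) :
    ∫⁻ x in Ioo (a - m) (a + m), g x ≤ ∫⁻ x in Ioo (-m) m, g x := by
  rcases le_total 0 a with ha | ha
  · exact heven.setLIntegral_Ioo_le_of_nonneg hmono ha
  · rw [← heven.setLIntegral_Ioo_neg]
    convert heven.setLIntegral_Ioo_le_of_nonneg hmono (neg_nonneg.mpr ha) using 3
    congr 1 <;> ring

end WindowMass

theorem stmt15_general {Ω : Type*} [MeasurableSpace Ω] (μ : Measure Ω) [IsProbabilityMeasure μ]
    (X : Ω → ℝ) (hX : Measurable X) (f : ℝ → ℝ)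
    (hpdf : μ.map X = MeasureTheory.volume.withDensity fun t => ENNReal.ofReal (f t))
    (heven : ∀ t, f (-t) = f t) (hmono : AntitoneOn f (Set.Ici 0))
    (m : ℝ) (hm : (1 : ℝ≥0∞) / 2 ≤ μ {ω | m ≤ |X ω|}) (a : ℝ) :
    (1 : ℝ≥0∞) / 2 ≤ μ {ω | m ≤ |X ω - a|} := by
  have : IsProbabilityMeasure (μ.map X) := Measure.isProbabilityMeasure_map hX.aemeasurable
  have hset : ∀ c, {ω | m ≤ |X ω - c|} = X ⁻¹' (Ioo (c - m) (c + m))ᶜ := fun c => by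
    ext ω
    simp [← Real.ball_eq_Ioo, Real.dist_eq]
  have hset₀ : {ω | m ≤ |X ω|} = X ⁻¹' (Ioo (-m) m)ᶜ := by
    simpa only [sub_zero, zero_sub, zero_add] using hset 0
  have hwindow : μ.map X (Ioo (a - m) (a + m)) ≤ μ.map X (Ioo (-m) m) := by
    rw [hpdf, withDensity_apply _ measurableSet_Ioo, withDensity_apply _ measurableSet_Ioo]
    refine Function.Even.setLIntegral_Ioo_le (fun t => by simp only [heven]) ?_ m a
    exact fun s hs t ht hst => ENNReal.ofReal_le_ofReal (hmono hs ht hst)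
  rw [hset₀] at hm
  rw [hset]
  rw [← Measure.map_apply hX measurableSet_Ioo.compl,
    prob_compl_eq_one_sub measurableSet_Ioo] at hm ⊢
  exact hm.trans (tsub_le_tsub_left hwindow 1)

/-- If `X` has an even density `f` that is nonincreasing on `[0,∞)`, and
`m ≥ 0` satisfies `P(|X| ≥ m) ≥ 1/2`, then for every `a ∈ ℝ`, `P(|X − a| ≥ m) ≥ 1/2`. -/
theorem stmt15 {Ω : Type*} [MeasurableSpace Ω] (μ : Measure Ω) [IsProbabilityMeasure μ]
    (X : Ω → ℝ) (hX : Measurable X) (f : ℝ → ℝ) (hf_nonneg : ∀ t, 0 ≤ f t)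
    (hpdf : μ.map X = MeasureTheory.volume.withDensity fun t => ENNReal.ofReal (f t))
    (heven : ∀ t, f (-t) = f t) (hmono : AntitoneOn f (Set.Ici 0))
    (m : ℝ) (hm0 : 0 ≤ m) (hm : (1 : ℝ≥0∞) / 2 ≤ μ {ω | m ≤ |X ω|}) (a : ℝ) :
    (1 : ℝ≥0∞) / 2 ≤ μ {ω | m ≤ |X ω - a|} :=
  stmt15_general μ X hX f hpdf heven hmono m hm a
end

section
/- Let L : ℝ^p → ℝ be a convex differentiable function, let β* ∈ ℝ^p have support S with |S| ≤ k, and let λ̄ > 0. Suppose β̂ satisfies the basic inequality L(β̂) + λ̄‖β̂‖₁ ≤ L(β*) + λ̄‖β*‖₁, that ‖∇L(β*)‖_∞ ≤ λ̄/2, and that the restricted strong convexity bound L(β̂) − L(β*) − ⟨∇L(β*), β̂ − β*⟩ ≥ α ‖β̂ − β*‖₂² holds for some α > 0. Then ‖β̂ − β*‖₂ ≤ 3λ̄√k/(2α). -/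
/-!
Write `ν = β̂ - β*` and split `‖ν‖₁ = ‖ν_S‖₁ + ‖ν_{Sᶜ}‖₁`. Since `β*` vanishes off `S`, the
triangle inequality turns the basic inequality into `L(β̂) - L(β*) ≤ λ̄ (‖ν_S‖₁ - ‖ν_{Sᶜ}‖₁)`,
and Hölder's inequality with the gradient bound gives `-⟨∇L(β*), ν⟩ ≤ λ̄/2 (‖ν_S‖₁ + ‖ν_{Sᶜ}‖₁)`.
Adding these, restricted strong convexity yields `α ‖ν‖₂² ≤ 3λ̄/2 ‖ν_S‖₁`, and Cauchy–Schwarz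
on the at most `k` coordinates of `S` gives `‖ν_S‖₁ ≤ √k ‖ν‖₂`.
-/

open Finset

theorem sum_abs_sub_sum_abs_le_of_support {ι : Type*} [Fintype ι] [DecidableEq ι]
    {x y : ι → ℝ} {S : Finset ι} (hy : ∀ j ∉ S, y j = 0) :
    ∑ j, |y j| - ∑ j, |x j| ≤ ∑ j ∈ S, |x j - y j| - ∑ j ∈ Sᶜ, |x j - y j| := by
  rw [← sum_add_sum_compl S fun j => |y j|, ← sum_add_sum_compl S fun j => |x j|]
  have hS : ∑ j ∈ S, |y j| - ∑ j ∈ S, |x j| ≤ ∑ j ∈ S, |x j - y j| := by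
    rw [← sum_sub_distrib]
    gcongr with j
    rw [abs_sub_comm]
    exact abs_sub_abs_le_abs_sub _ _
  have hy_compl : ∀ j ∈ Sᶜ, y j = 0 := fun j hj => hy j (mem_compl.mp hj)
  have hSc_y : ∑ j ∈ Sᶜ, |y j| = 0 := sum_eq_zero fun j hj => by simp [hy_compl j hj]
  have hSc_x : ∑ j ∈ Sᶜ, |x j - y j| = ∑ j ∈ Sᶜ, |x j| :=
    sum_congr rfl fun j hj => by rw [hy_compl j hj, sub_zero]
  linarith

theorem abs_inner_le_mul_sum_abs {ι : Type*} [Fintype ι] {g : EuclideanSpace ℝ ι} {c : ℝ}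
    (hg : ∀ j, |g j| ≤ c) (v : EuclideanSpace ℝ ι) :
    |inner ℝ g v| ≤ c * ∑ j, |v j| := by
  rw [PiLp.inner_apply, mul_sum]
  refine (abs_sum_le_sum_abs _ _).trans (sum_le_sum fun j _ => ?_)
  rw [real_inner_eq_re_inner, RCLike.inner_apply, conj_trivial, RCLike.re_to_real, abs_mul,
    mul_comm]
  exact mul_le_mul_of_nonneg_right (hg j) (abs_nonneg _)

theorem sum_abs_le_sqrt_card_mul_norm {ι : Type*} [Fintype ι] (v : EuclideanSpace ℝ ι)
    (S : Finset ι) : ∑ j ∈ S, |v j| ≤ √(#S : ℝ) * ‖v‖ := by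
  have hS : ∑ j ∈ S, |v j| ^ 2 ≤ ∑ j, |v j| ^ 2 :=
    sum_le_sum_of_subset_of_nonneg (subset_univ S) fun j _ _ => sq_nonneg _
  calc ∑ j ∈ S, |v j| = ∑ j ∈ S, 1 * |v j| := by simp only [one_mul]
    _ ≤ √(∑ j ∈ S, (1 : ℝ) ^ 2) * √(∑ j ∈ S, |v j| ^ 2) := Real.sum_mul_le_sqrt_mul_sqrt _ _ _
    _ ≤ √(#S : ℝ) * ‖v‖ := by
      rw [EuclideanSpace.norm_eq]
      simp only [one_pow, sum_const, nsmul_eq_mul, mul_one, Real.norm_eq_abs]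
      gcongr

theorem le_div_of_mul_sq_le_mul {a b x : ℝ} (ha : 0 < a) (hb : 0 ≤ b) (hx : 0 ≤ x)
    (h : a * x ^ 2 ≤ b * x) : x ≤ b / a := by
  rw [le_div_iff₀ ha]
  rcases hx.eq_or_lt with rfl | hx
  · simpa using hb
  · nlinarith

theorem stmt17_general {p : ℕ} (L : EuclideanSpace ℝ (Fin p) → ℝ)
    (L' : EuclideanSpace ℝ (Fin p) → EuclideanSpace ℝ (Fin p))
    (βstar βhat : EuclideanSpace ℝ (Fin p)) (S : Finset (Fin p)) (k : ℕ)
    (hsupp : ∀ j ∉ S, βstar j = 0) (hcard : S.card ≤ k)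
    (lam : ℝ) (hlam : 0 < lam)
    (hbasic : L βhat + lam * ∑ j, |βhat j| ≤ L βstar + lam * ∑ j, |βstar j|)
    (hgradbound : ∀ j, |L' βstar j| ≤ lam / 2)
    (α : ℝ) (hα : 0 < α)
    (hRSC : α * ‖βhat - βstar‖ ^ 2 ≤
      L βhat - L βstar - (inner ℝ (L' βstar) (βhat - βstar) : ℝ)) :
    ‖βhat - βstar‖ ≤ 3 * lam * Real.sqrt k / (2 * α) := by
  set ν := βhat - βstar
  have hcone : ∑ j, |βstar j| - ∑ j, |βhat j| ≤ ∑ j ∈ S, |ν j| - ∑ j ∈ Sᶜ, |ν j| :=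
    sum_abs_sub_sum_abs_le_of_support hsupp
  have hinner := abs_inner_le_mul_sum_abs hgradbound ν
  rw [← sum_add_sum_compl S] at hinner
  have hsupport_bound : 2 * α * ‖ν‖ ^ 2 ≤ 3 * lam * ∑ j ∈ S, |ν j| := by
    have := mul_le_mul_of_nonneg_left hcone hlam.le
    have := mul_nonneg hlam.le (sum_nonneg fun j (_ : j ∈ Sᶜ) => abs_nonneg (ν j))
    linarith [neg_abs_le (inner ℝ (L' βstar) ν)]
  have hsqrt_card : √(#S : ℝ) ≤ √k := Real.sqrt_le_sqrt (by exact_mod_cast hcard)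
  refine le_div_of_mul_sq_le_mul (by positivity) (by positivity) (norm_nonneg ν) ?_
  calc 2 * α * ‖ν‖ ^ 2 ≤ 3 * lam * ∑ j ∈ S, |ν j| := hsupport_bound
    _ ≤ 3 * lam * (√k * ‖ν‖) := by
      gcongr
      exact (sum_abs_le_sqrt_card_mul_norm ν S).trans (by gcongr)
    _ = 3 * lam * √k * ‖ν‖ := by ring

/-- Deterministic core of the estimation-error bound: if the basic
inequality, the gradient bound `‖∇L(β*)‖_∞ ≤ λ̄/2`, and the restricted strong convexity
bound hold, then `‖β̂ − β*‖₂ ≤ 3λ̄√k/(2α)`. -/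
theorem stmt17 {p : ℕ} (L : EuclideanSpace ℝ (Fin p) → ℝ)
    (hconv : ConvexOn ℝ Set.univ L)
    (L' : EuclideanSpace ℝ (Fin p) → EuclideanSpace ℝ (Fin p))
    (hgrad : ∀ β, HasGradientAt L (L' β) β)
    (βstar βhat : EuclideanSpace ℝ (Fin p)) (S : Finset (Fin p)) (k : ℕ)
    (hsupp : ∀ j ∉ S, βstar j = 0) (hcard : S.card ≤ k)
    (lam : ℝ) (hlam : 0 < lam)
    (hbasic : L βhat + lam * ∑ j, |βhat j| ≤ L βstar + lam * ∑ j, |βstar j|)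
    (hgradbound : ∀ j, |L' βstar j| ≤ lam / 2)
    (α : ℝ) (hα : 0 < α)
    (hRSC : α * ‖βhat - βstar‖ ^ 2 ≤
      L βhat - L βstar - (inner ℝ (L' βstar) (βhat - βstar) : ℝ)) :
    ‖βhat - βstar‖ ≤ 3 * lam * Real.sqrt k / (2 * α) :=
  stmt17_general L L' βstar βhat S k hsupp hcard lam hlam hbasic hgradbound α hα hRSC
end
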